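/- arXiv:1607.04557 — 8 statements merged into one kernel-verified Lean document; each statement's English description precedes it below -/
import Mathlib

section
/- Let D be a symmetric nonnegative n×n real matrix of negative type, i.e., x^T D x ≤ 0 for all x ∈ ℝ^n with ∑_i x_i = 0. Then for any two non-zero vectors x, y ∈ ℝ^n with nonnegative entries, (‖y‖₁/‖x‖₁)·(x^T D x) + (‖x‖₁/‖y‖₁)·(y^T D y) ≤ 2·(x^T D y). -/
open Finset

theorem stmt_0 (n : ℕ) (D : Matrix (Fin n) (Fin n) ℝ)
    (hsymm : ∀ i j, D i j = D j i) (hnonneg : ∀ i j, 0 ≤ D i j)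
    (hneg : ∀ x : Fin n → ℝ, ∑ i, x i = 0 → ∑ i, ∑ j, x i * D i j * x j ≤ 0)
    (x y : Fin n → ℝ) (hx : x ≠ 0) (hy : y ≠ 0)
    (hxnn : ∀ i, 0 ≤ x i) (hynn : ∀ i, 0 ≤ y i) :
    (∑ i, |y i|) / (∑ i, |x i|) * (∑ i, ∑ j, x i * D i j * x j)
      + (∑ i, |x i|) / (∑ i, |y i|) * (∑ i, ∑ j, y i * D i j * y j)
      ≤ 2 * (∑ i, ∑ j, x i * D i j * y j) := by
  set a := ∑ i, x i with ha_def
  set b := ∑ i, y i with hb_def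
  have hax : (∑ i, |x i|) = a := Finset.sum_congr rfl fun i _ => abs_of_nonneg (hxnn i)
  have hay : (∑ i, |y i|) = b := Finset.sum_congr rfl fun i _ => abs_of_nonneg (hynn i)
  have ha : 0 < a := by
    obtain ⟨i, hi⟩ : ∃ i, x i ≠ 0 := by
      by_contra h; push_neg at h; exact hx (funext h)
    exact Finset.sum_pos' (fun i _ => hxnn i)
      ⟨i, Finset.mem_univ i, lt_of_le_of_ne (hxnn i) (Ne.symm hi)⟩
  have hb : 0 < b := by
    obtain ⟨i, hi⟩ : ∃ i, y i ≠ 0 := by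
      by_contra h; push_neg at h; exact hy (funext h)
    exact Finset.sum_pos' (fun i _ => hynn i)
      ⟨i, Finset.mem_univ i, lt_of_le_of_ne (hynn i) (Ne.symm hi)⟩
  set z : Fin n → ℝ := fun i => x i / a - y i / b with hz_def
  have hzsum : ∑ i, z i = 0 := by
    simp only [hz_def, Finset.sum_sub_distrib, ← Finset.sum_div, ← ha_def, ← hb_def,
      div_self ha.ne', div_self hb.ne', sub_self]
  have key := hneg z hzsum
  have hsym : (∑ i, ∑ j, y i * D i j * x j) = ∑ i, ∑ j, x i * D i j * y j := by
    rw [Finset.sum_comm]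
    exact Finset.sum_congr rfl fun i _ => Finset.sum_congr rfl fun j _ => by
      rw [hsymm]; ring
  have expand : (∑ i, ∑ j, z i * D i j * z j)
      = (∑ i, ∑ j, x i * D i j * x j) / (a * a)
        - (∑ i, ∑ j, x i * D i j * y j) / (a * b)
        - (∑ i, ∑ j, y i * D i j * x j) / (a * b)
        + (∑ i, ∑ j, y i * D i j * y j) / (b * b) := by
    simp only [Finset.sum_div, ← Finset.sum_sub_distrib, ← Finset.sum_add_distrib]
    refine Finset.sum_congr rfl fun i _ => Finset.sum_congr rfl fun j _ => ?_
    simp only [hz_def]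
    field_simp
    ring
  rw [expand, hsym] at key
  rw [hax, hay]
  have h3 : a * b * ((∑ i, ∑ j, x i * D i j * x j) / (a * a)
        - (∑ i, ∑ j, x i * D i j * y j) / (a * b)
        - (∑ i, ∑ j, x i * D i j * y j) / (a * b)
        + (∑ i, ∑ j, y i * D i j * y j) / (b * b)) ≤ 0 :=
    mul_nonpos_of_nonneg_of_nonpos (le_of_lt (mul_pos ha hb)) key
  have heq : a * b * ((∑ i, ∑ j, x i * D i j * x j) / (a * a)
        - (∑ i, ∑ j, x i * D i j * y j) / (a * b)
        - (∑ i, ∑ j, x i * D i j * y j) / (a * b)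
        + (∑ i, ∑ j, y i * D i j * y j) / (b * b))
      = b / a * (∑ i, ∑ j, x i * D i j * x j)
        + a / b * (∑ i, ∑ j, y i * D i j * y j)
        - 2 * (∑ i, ∑ j, x i * D i j * y j) := by
    field_simp
    ring
  linarith [heq ▸ h3]
end

section
/- Let X be a finite set and d : X × X → ℝ≥0 a symmetric distance of negative type with d(a,a)=0. For any two non-empty subsets A, B ⊆ X, (|B|/|A|)·d(A) + (|A|/|B|)·d(B) ≤ d(A,B), where d(A) = ∑_{{a,a'}⊆A} d(a,a') and d(A,B) = ∑_{a∈A, b∈B} d(a,b). -/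
/-!
Test negative type on `x = |B| • 𝟙_A - |A| • 𝟙_B`, whose coordinates sum to `|B||A| - |A||B| = 0`.
Expanding the quadratic form gives `|B|² d(A,A) + |A|² d(B,B) - 2|A||B| d(A,B) ≤ 0`, and dividing
by `2|A||B|` is the claim since `d(A,A) = 2 d(A)`.
-/

open Finset

/-- `d` is a distance of negative type on the finite type `X`. -/
def NegType {X : Type*} [Fintype X] (d : X → X → ℝ) : Prop :=
  ∀ x : X → ℝ, ∑ i, x i = 0 → ∑ i, ∑ j, x i * d i j * x j ≤ 0

/-- The dispersion of a finite set: sum of distances over unordered pairs. -/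
noncomputable def disp {X : Type*} (d : X → X → ℝ) (A : Finset X) : ℝ :=
  (∑ a ∈ A, ∑ b ∈ A, d a b) / 2

/-- Sum of all distances between two sets. -/
def dsum {X : Type*} (d : X → X → ℝ) (A B : Finset X) : ℝ :=
  ∑ a ∈ A, ∑ b ∈ B, d a b

theorem dsum_comm {X : Type*} {d : X → X → ℝ} (hsymm : ∀ a b, d a b = d b a)
    (A B : Finset X) : dsum d B A = dsum d A B := by
  rw [dsum, dsum, sum_comm]
  exact sum_congr rfl fun i _ => sum_congr rfl fun j _ => hsymm _ _

theorem disp_eq_dsum_self_div_two {X : Type*} (d : X → X → ℝ) (A : Finset X) :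
    disp d A = dsum d A A / 2 := rfl

theorem sum_sum_ite_mul_ite {X : Type*} [Fintype X] [DecidableEq X] (d : X → X → ℝ)
    (C D : Finset X) (c e : ℝ) :
    ∑ i, ∑ j, (if i ∈ C then c else 0) * d i j * (if j ∈ D then e else 0)
      = c * e * dsum d C D := by
  simp only [ite_mul, zero_mul, mul_ite, mul_zero, sum_ite_mem, univ_inter, sum_ite_irrel,
    sum_const_zero, dsum, mul_sum]
  exact sum_congr rfl fun i _ => sum_congr rfl fun j _ => by ring

theorem NegType.sq_mul_dsum_add_sq_mul_dsum_le {X : Type*} [Fintype X] {d : X → X → ℝ}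
    (hsymm : ∀ a b, d a b = d b a) (hneg : NegType d) {A B : Finset X} {c e : ℝ}
    (hce : c * A.card = e * B.card) :
    c ^ 2 * dsum d A A + e ^ 2 * dsum d B B ≤ 2 * (c * e) * dsum d A B := by
  classical
  set x : X → ℝ := fun i => (if i ∈ A then c else 0) - (if i ∈ B then e else 0)
  have hsum : ∑ i, x i = 0 := by
    simp only [x, sum_sub_distrib, sum_ite_mem, univ_inter, sum_const, nsmul_eq_mul]
    linarith
  have hexpand : ∑ i, ∑ j, x i * d i j * x j
      = c ^ 2 * dsum d A A + e ^ 2 * dsum d B B - 2 * (c * e) * dsum d A B := by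
    simp only [x, sub_mul, mul_sub, sum_sub_distrib, sum_sum_ite_mul_ite, dsum_comm hsymm B A]
    ring
  linarith [hneg x hsum]

theorem stmt_1_general {X : Type*} [Fintype X] (d : X → X → ℝ)
    (hsymm : ∀ a b, d a b = d b a)
    (hneg : NegType d)
    (A B : Finset X) (hA : A.Nonempty) (hB : B.Nonempty) :
    (B.card : ℝ) / A.card * disp d A + (A.card : ℝ) / B.card * disp d B
      ≤ dsum d A B := by
  have ha : (0 : ℝ) < A.card := by exact_mod_cast hA.card_pos
  have hb : (0 : ℝ) < B.card := by exact_mod_cast hB.card_pos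
  have key := hneg.sq_mul_dsum_add_sq_mul_dsum_le hsymm (mul_comm (B.card : ℝ) A.card)
  rw [disp_eq_dsum_self_div_two, disp_eq_dsum_self_div_two]
  calc (B.card : ℝ) / A.card * (dsum d A A / 2) + (A.card : ℝ) / B.card * (dsum d B B / 2)
      = ((B.card : ℝ) ^ 2 * dsum d A A + (A.card : ℝ) ^ 2 * dsum d B B)
          / (2 * (B.card * A.card)) := by
        field_simp
    _ ≤ dsum d A B := by
        rw [div_le_iff₀ (by positivity)]
        linarith

theorem stmt_1 {X : Type*} [Fintype X] (d : X → X → ℝ)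
    (hsymm : ∀ a b, d a b = d b a) (hnonneg : ∀ a b, 0 ≤ d a b)
    (hdiag : ∀ a, d a a = 0) (hneg : NegType d)
    (A B : Finset X) (hA : A.Nonempty) (hB : B.Nonempty) :
    (B.card : ℝ) / A.card * disp d A + (A.card : ℝ) / B.card * disp d B
      ≤ dsum d A B :=
  stmt_1_general d hsymm hneg A B hA hB
end

section
/- Let d be a negative-type distance on a finite set X. For any two subsets A, B ⊆ X of equal cardinality k ≥ 1 and any bijection π : A → B, the sum ∑_{a∈A} d(a, π(a)) ≤ (2/k) · d(A,B). -/
open Finset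

section Aux

variable {X : Type*} [Fintype X] [DecidableEq X] (d : X → X → ℝ)

/-- The bilinear form associated to `d`. -/
noncomputable def bform (x y : X → ℝ) : ℝ := ∑ i, ∑ j, x i * d i j * y j

/-- Point mass of weight `c` at `a`. -/
noncomputable def ptw (a : X) (c : ℝ) : X → ℝ := fun i => if i = a then c else 0

/-- Indicator of a finset. -/
noncomputable def ind (s : Finset X) : X → ℝ := fun i => if i ∈ s then 1 else 0

lemma bform_symm (hsymm : ∀ a b, d a b = d b a) (x y : X → ℝ) :
    bform d x y = bform d y x := by
  rw [bform, bform, Finset.sum_comm]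
  refine Finset.sum_congr rfl fun i _ => Finset.sum_congr rfl fun j _ => ?_
  rw [hsymm]; ring

lemma bform_add_left (x x' y : X → ℝ) :
    bform d (x + x') y = bform d x y + bform d x' y := by
  simp [bform, add_mul, Finset.sum_add_distrib]

lemma bform_add_right (x y y' : X → ℝ) :
    bform d x (y + y') = bform d x y + bform d x y' := by
  simp [bform, mul_add, Finset.sum_add_distrib]

lemma bform_neg_type (hsymm : ∀ a b, d a b = d b a) (hneg : NegType d) (x y : X → ℝ)
    (h : ∑ i, x i = ∑ i, y i) :
    bform d x x + bform d y y ≤ 2 * bform d x y := by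
  have h0 : ∑ i, (x i - y i) = 0 := by
    rw [Finset.sum_sub_distrib, h, sub_self]
  have := hneg (fun i => x i - y i) h0
  have expand : ∑ i, ∑ j, (x i - y i) * d i j * (x j - y j)
      = bform d x x - bform d x y - bform d y x + bform d y y := by
    have hpt : ∀ i j, (x i - y i) * d i j * (x j - y j)
        = x i * d i j * x j - x i * d i j * y j
          - (y i * d i j * x j - y i * d i j * y j) := by intros; ring
    simp only [bform, hpt, Finset.sum_sub_distrib]
    ring
  rw [expand] at this
  rw [bform_symm d hsymm y x] at this
  linarith

lemma sum_ind (s : Finset X) : ∑ i, ind (X := X) s i = s.card := by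
  simp [ind]

lemma sum_ptw (a : X) (c : ℝ) : ∑ i, ptw (X := X) a c i = c := by
  simp [ptw]

lemma bform_ind_ind (s t : Finset X) :
    bform d (ind s) (ind t) = ∑ a ∈ s, ∑ b ∈ t, d a b := by
  simp [bform, ind, ite_mul, mul_ite]

lemma bform_ptw_left (a : X) (c : ℝ) (y : X → ℝ) :
    bform d (ptw a c) y = c * ∑ j, d a j * y j := by
  rw [bform, Finset.sum_comm]
  simp [ptw, mul_ite, ite_mul, Finset.mul_sum, mul_assoc, mul_comm, mul_left_comm]

lemma bform_ptw_ind (a : X) (c : ℝ) (t : Finset X) :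
    bform d (ptw a c) (ind t) = c * ∑ b ∈ t, d a b := by
  rw [bform_ptw_left]
  simp [ind, mul_ite]

lemma bform_ptw_ptw (a b : X) (c c' : ℝ) :
    bform d (ptw a c) (ptw b c') = c * c' * d a b := by
  rw [bform_ptw_left]
  simp [ptw, mul_ite, mul_comm, mul_assoc, mul_left_comm]

end Aux

theorem stmt_2 {X : Type*} [Fintype X] [DecidableEq X] (d : X → X → ℝ)
    (hsymm : ∀ a b, d a b = d b a) (hnonneg : ∀ a b, 0 ≤ d a b)
    (hdiag : ∀ a, d a a = 0) (hneg : NegType d)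
    (k : ℕ) (hk : 1 ≤ k) (A B : Finset X) (hAcard : A.card = k) (hBcard : B.card = k)
    (π : X → X) (hbij : Set.BijOn π ↑A ↑B) :
    ∑ a ∈ A, d a (π a) ≤ 2 / k * dsum d A B := by
  classical
  have hkpos : (0:ℝ) < k := by exact_mod_cast hk
  -- reindexing over the bijection
  have hre : ∀ f : X → ℝ, ∑ a ∈ A, f (π a) = ∑ b ∈ B, f b := by
    intro f
    refine Finset.sum_bij (fun a _ => π a) (fun a ha => hbij.mapsTo ha)
      (fun a ha a' ha' h => hbij.injOn ha ha' h) (fun b hb => ?_) (fun a ha => rfl)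
    obtain ⟨a, ha, rfl⟩ := hbij.surjOn hb
    exact ⟨a, ha, rfl⟩
  have hBA : bform d (ind B) (ind A) = bform d (ind A) (ind B) := bform_symm d hsymm _ _
  have hsumA : ∑ i, ind (X := X) A i = (k:ℝ) := by rw [sum_ind, hAcard]
  have hsumB : ∑ i, ind (X := X) B i = (k:ℝ) := by rw [sum_ind, hBcard]
  -- Step 1
  have step1 : bform d (ind A) (ind A) + bform d (ind B) (ind B)
      ≤ 2 * bform d (ind A) (ind B) :=
    bform_neg_type d hsymm hneg _ _ (by rw [hsumA, hsumB])
  -- Step 2: per-element inequality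
  have step2 : ∀ a ∈ A,
      2 * (k:ℝ)^2 * d a (π a)
        + (bform d (ind A) (ind A) + bform d (ind B) (ind B)
            + 2 * bform d (ind A) (ind B))
        ≤ 2 * k * ((∑ b ∈ A, d a b) + (∑ b ∈ B, d a b)
            + (∑ b ∈ A, d (π a) b) + (∑ b ∈ B, d (π a) b)) := by
    intro a ha
    have hx : ∑ i, (ptw a (k:ℝ) + ptw (π a) (k:ℝ)) i = (2*k : ℝ) := by
      simp [sum_ptw, Finset.sum_add_distrib]; ring
    have hy : ∑ i, (ind (X := X) A + ind (X := X) B) i = (2*k : ℝ) := by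
      simp only [Pi.add_apply, Finset.sum_add_distrib, hsumA, hsumB]; ring
    have key := bform_neg_type d hsymm hneg (ptw a (k:ℝ) + ptw (π a) (k:ℝ))
      (ind A + ind B) (by rw [hx, hy])
    simp only [bform_add_left, bform_add_right, bform_ptw_ptw, bform_ptw_ind] at key
    rw [hdiag, hdiag, hsymm (π a) a, hBA] at key
    nlinarith [key]
  -- sum Step 2 over A
  have hsum2 := Finset.sum_le_sum step2
  rw [Finset.sum_add_distrib, Finset.sum_const, hAcard, ← Finset.mul_sum,
    ← Finset.mul_sum] at hsum2
  have e1 : ∑ a ∈ A, ∑ b ∈ A, d a b = bform d (ind A) (ind A) := (bform_ind_ind d A A).symm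
  have e2 : ∑ a ∈ A, ∑ b ∈ B, d a b = bform d (ind A) (ind B) := (bform_ind_ind d A B).symm
  have e3 : ∑ a ∈ A, ∑ b ∈ A, d (π a) b = bform d (ind A) (ind B) := by
    rw [hre (fun x => ∑ b ∈ A, d x b), ← hBA]
    exact (bform_ind_ind d B A).symm
  have e4 : ∑ a ∈ A, ∑ b ∈ B, d (π a) b = bform d (ind B) (ind B) := by
    rw [hre (fun x => ∑ b ∈ B, d x b)]
    exact (bform_ind_ind d B B).symm
  rw [show (∑ a ∈ A, ((∑ b ∈ A, d a b) + (∑ b ∈ B, d a b)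
        + (∑ b ∈ A, d (π a) b) + (∑ b ∈ B, d (π a) b)))
      = (∑ a ∈ A, ∑ b ∈ A, d a b) + (∑ a ∈ A, ∑ b ∈ B, d a b)
        + (∑ a ∈ A, ∑ b ∈ A, d (π a) b) + (∑ a ∈ A, ∑ b ∈ B, d (π a) b) by
      simp [Finset.sum_add_distrib], e1, e2, e3, e4, nsmul_eq_mul] at hsum2
  have hAB_dsum : bform d (ind A) (ind B) = dsum d A B := by
    rw [bform_ind_ind]; rfl
  rw [div_mul_eq_mul_div, le_div_iff₀ hkpos, ← hAB_dsum]
  nlinarith [hsum2, step1, hkpos,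
    Finset.sum_nonneg fun a (_ : a ∈ A) => hnonneg a (π a)]
end

section
/- Let d be a negative-type distance on X and A ⊆ X with |A| = k ≥ 1. For any a, b ∈ X, d(A, a) + d(A, b) ≥ (2/k)·d(A) + (k/2)·d(a,b), where d(A,x) = ∑_{a'∈A} d(a',x). -/
open Finset

theorem stmt_7 {X : Type*} [Fintype X] [DecidableEq X] (d : X → X → ℝ)
    (hsymm : ∀ a b, d a b = d b a) (hnonneg : ∀ a b, 0 ≤ d a b)
    (hdiag : ∀ a, d a a = 0) (hneg : NegType d)
    (k : ℕ) (hk : 1 ≤ k) (A : Finset X) (hAcard : A.card = k) (a b : X) :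
    (∑ a' ∈ A, d a' a) + (∑ a' ∈ A, d a' b)
      ≥ 2 / k * disp d A + (k : ℝ) / 2 * d a b := by
  set x : X → ℝ := fun i => (if i ∈ A then (1:ℝ) else 0)
      - ((if i = a then (k:ℝ)/2 else 0) + (if i = b then (k:ℝ)/2 else 0)) with hx
  have hsum : ∑ i, x i = 0 := by
    simp [hx, Finset.sum_sub_distrib, Finset.sum_add_distrib, Finset.sum_ite_eq',
      Finset.sum_ite_mem, hAcard]
  have inner : ∀ i, ∑ j, d i j * x j
      = (∑ j ∈ A, d i j) - (k:ℝ)/2 * (d i a + d i b) := by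
    intro i
    simp [hx, mul_sub, mul_add, mul_ite, mul_zero, mul_one,
      Finset.sum_sub_distrib, Finset.sum_add_distrib, Finset.sum_ite_eq',
      Finset.sum_ite_mem]
    ring
  have hSa : ∀ i, ∑ j ∈ A, d i j = ∑ a' ∈ A, d a' i := by
    intro i; exact Finset.sum_congr rfl fun j _ => hsymm i j
  have key : ∑ i, ∑ j, x i * d i j * x j
      = (∑ p ∈ A, ∑ q ∈ A, d p q)
        - (k:ℝ) * ((∑ a' ∈ A, d a' a) + (∑ a' ∈ A, d a' b))
        + (k:ℝ)^2/2 * d a b := by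
    have h1 : ∑ i, ∑ j, x i * d i j * x j = ∑ i, x i * ∑ j, d i j * x j := by
      refine Finset.sum_congr rfl fun i _ => ?_
      rw [Finset.mul_sum]
      exact Finset.sum_congr rfl fun j _ => by ring
    rw [h1]
    have h2 : ∑ i, x i * ((∑ j ∈ A, d i j) - (k:ℝ)/2 * (d i a + d i b))
        = (∑ p ∈ A, ∑ q ∈ A, d p q)
        - (k:ℝ) * ((∑ a' ∈ A, d a' a) + (∑ a' ∈ A, d a' b))
        + (k:ℝ)^2/2 * d a b := by
      simp only [hx, sub_mul, add_mul, ite_mul, one_mul, zero_mul,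
        Finset.sum_sub_distrib, Finset.sum_add_distrib, Finset.sum_ite_eq',
        Finset.sum_ite_mem, Finset.mem_univ, if_true, Finset.univ_inter]
      have e2 : ∑ i ∈ A, (k:ℝ)/2 * (d i a + d i b)
          = (k:ℝ)/2 * ((∑ a' ∈ A, d a' a) + (∑ a' ∈ A, d a' b)) := by
        rw [← Finset.sum_add_distrib, Finset.mul_sum]
      rw [e2, hSa a, hSa b, hdiag a, hdiag b, hsymm b a]
      ring
    rw [← h2]
    exact Finset.sum_congr rfl fun i _ => by rw [inner i]
  have hle := hneg x hsum
  rw [key] at hle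
  have hk' : (0:ℝ) < k := by exact_mod_cast hk
  rw [ge_iff_le, disp]
  rw [div_mul_eq_mul_div, div_add' _ _ _ (ne_of_gt hk'), div_le_iff₀ hk']
  nlinarith [hle]
end

section
/- Let d be a negative-type distance on X and A, B ⊆ X with |A| = |B| = k ≥ 1 and a bijection π : A → B. Then d(A,A) + d(A,B) ≥ 2·d(A) + (k/2)·∑_{a∈A} d(a, π(a)). -/
open Finset

section helpers
variable {X : Type*} [Fintype X] [DecidableEq X]

lemma qform (d : X → X → ℝ) (hneg : NegType d) (x : X → ℝ) (hx : ∑ i, x i = 0) :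
    ∑ i, x i * (∑ j, d i j * x j) ≤ 0 := by
  have := hneg x hx
  calc ∑ i, x i * (∑ j, d i j * x j) = ∑ i, ∑ j, x i * d i j * x j := by
        simp [Finset.mul_sum, mul_assoc]
    _ ≤ 0 := this

lemma sum_indsub (A B : Finset X) (g : X → ℝ) :
    ∑ i, ((if i ∈ A then (1:ℝ) else 0) - (if i ∈ B then 1 else 0)) * g i
      = (∑ i ∈ A, g i) - ∑ i ∈ B, g i := by
  simp [sub_mul, Finset.sum_sub_distrib, ite_mul, Finset.sum_ite_mem]

lemma sum_v2 (A B : Finset X) (k : ℝ) (a b : X) (g : X → ℝ) :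
    ∑ i, (k * (if i = a then (1:ℝ) else 0) + k * (if i = b then 1 else 0)
        - (if i ∈ A then 1 else 0) - (if i ∈ B then 1 else 0)) * g i
      = k * g a + k * g b - (∑ i ∈ A, g i) - ∑ i ∈ B, g i := by
  simp [sub_mul, add_mul, mul_assoc, ite_mul, Finset.sum_sub_distrib,
    Finset.sum_add_distrib, Finset.mul_sum, Finset.sum_ite_mem, Finset.sum_ite_eq']

lemma inner_v2 (d : X → X → ℝ) (A B : Finset X) (k : ℝ) (a b : X) (i : X) :
    ∑ j, d i j * (k * (if j = a then (1:ℝ) else 0) + k * (if j = b then 1 else 0)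
        - (if j ∈ A then 1 else 0) - (if j ∈ B then 1 else 0))
      = k * d i a + k * d i b - (∑ j ∈ A, d i j) - ∑ j ∈ B, d i j := by
  simp [mul_sub, mul_add, mul_ite, Finset.sum_sub_distrib, Finset.sum_add_distrib,
    Finset.sum_ite_mem, Finset.sum_ite_eq', mul_comm]

lemma inner_v1 (d : X → X → ℝ) (A B : Finset X) (i : X) :
    ∑ j, d i j * ((if j ∈ A then (1:ℝ) else 0) - (if j ∈ B then 1 else 0))
      = (∑ j ∈ A, d i j) - ∑ j ∈ B, d i j := by
  simp [mul_sub, mul_ite, Finset.sum_sub_distrib, Finset.sum_ite_mem]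

end helpers

theorem stmt_13 {X : Type*} [Fintype X] [DecidableEq X] (d : X → X → ℝ)
    (hsymm : ∀ a b, d a b = d b a) (hnonneg : ∀ a b, 0 ≤ d a b)
    (hdiag : ∀ a, d a a = 0) (hneg : NegType d)
    (k : ℕ) (hk : 1 ≤ k) (A B : Finset X) (hAcard : A.card = k) (hBcard : B.card = k)
    (π : X → X) (hbij : Set.BijOn π ↑A ↑B) :
    dsum d A A + dsum d A B ≥ 2 * disp d A + (k : ℝ) / 2 * ∑ a ∈ A, d a (π a) := by
  set rA : X → ℝ := fun x => ∑ j ∈ A, d x j with hrA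
  set rB : X → ℝ := fun x => ∑ j ∈ B, d x j with hrB
  have hcol : ∀ (S : Finset X) (x : X), (∑ i ∈ S, d i x) = ∑ i ∈ S, d x i :=
    fun S x => Finset.sum_congr rfl fun i _ => hsymm i x
  have hSBA : dsum d B A = dsum d A B := by
    unfold dsum; rw [Finset.sum_comm]
    exact Finset.sum_congr rfl fun a _ => Finset.sum_congr rfl fun b _ => hsymm b a
  have hSAA : dsum d A A = ∑ a ∈ A, rA a := rfl
  have hSAB : dsum d A B = ∑ a ∈ A, rB a := rfl
  -- reindexing along the bijection
  have hreindex : ∀ f : X → ℝ, ∑ a ∈ A, f (π a) = ∑ b ∈ B, f b := by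
    intro f
    refine Finset.sum_bij (fun a _ => π a) (fun a ha => hbij.mapsTo ha)
      (fun a ha a' ha' h => hbij.injOn ha ha' h) (fun b hb => ?_) (fun a ha => rfl)
    obtain ⟨a, ha, hab⟩ := hbij.surjOn hb
    exact ⟨a, ha, hab⟩
  -- Step 1 : dsum A A + dsum B B ≤ 2 dsum A B
  have step1 : dsum d A A + dsum d B B ≤ 2 * dsum d A B := by
    have hx : ∑ i, ((if i ∈ A then (1:ℝ) else 0) - (if i ∈ B then 1 else 0)) = 0 := by
      simp [Finset.sum_sub_distrib, Finset.sum_ite_mem, hAcard, hBcard]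
    have h := qform d hneg _ hx
    rw [show (∑ i, ((if i ∈ A then (1:ℝ) else 0) - (if i ∈ B then 1 else 0)) *
          (∑ j, d i j * ((if j ∈ A then (1:ℝ) else 0) - (if j ∈ B then 1 else 0))))
        = ∑ i, ((if i ∈ A then (1:ℝ) else 0) - (if i ∈ B then 1 else 0)) * (rA i - rB i)
      from Finset.sum_congr rfl fun i _ => by rw [inner_v1 d A B i]] at h
    rw [sum_indsub A B] at h
    simp only [Finset.sum_sub_distrib] at h
    have e1 : (∑ i ∈ B, rA i) = dsum d B A := rfl
    have e2 : (∑ i ∈ B, rB i) = dsum d B B := rfl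
    rw [e1, e2, ← hSAA, ← hSAB, hSBA] at h
    linarith
  -- Step 2 : per-element inequality
  have step2 : ∀ a ∈ A, 2*(k:ℝ)^2 * d a (π a) + (dsum d A A + dsum d B B + 2 * dsum d A B)
      ≤ 2*(k:ℝ)*(rA a + rB a + rA (π a) + rB (π a)) := by
    intro a ha
    set b := π a with hb
    have hx : ∑ i, ((k:ℝ) * (if i = a then (1:ℝ) else 0) + k * (if i = b then 1 else 0)
        - (if i ∈ A then 1 else 0) - (if i ∈ B then 1 else 0)) = 0 := by
      simp [Finset.sum_sub_distrib, Finset.sum_add_distrib, Finset.sum_ite_mem,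
        Finset.sum_ite_eq', hAcard, hBcard, Finset.mul_sum]
    have h := qform d hneg _ hx
    rw [show (∑ i, ((k:ℝ) * (if i = a then (1:ℝ) else 0) + k * (if i = b then 1 else 0)
          - (if i ∈ A then 1 else 0) - (if i ∈ B then 1 else 0)) *
          (∑ j, d i j * ((k:ℝ) * (if j = a then (1:ℝ) else 0) + k * (if j = b then 1 else 0)
          - (if j ∈ A then 1 else 0) - (if j ∈ B then 1 else 0))))
        = ∑ i, ((k:ℝ) * (if i = a then (1:ℝ) else 0) + k * (if i = b then 1 else 0)
          - (if i ∈ A then 1 else 0) - (if i ∈ B then 1 else 0)) *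
          ((k:ℝ) * d i a + k * d i b - rA i - rB i)
      from Finset.sum_congr rfl fun i _ => by rw [inner_v2 d A B k a b i]] at h
    rw [sum_v2 A B (k:ℝ) a b] at h
    simp only [Finset.sum_sub_distrib, Finset.sum_add_distrib, Finset.mul_sum] at h
    simp only [← Finset.mul_sum] at h
    have eAa : (∑ i ∈ A, d i a) = rA a := hcol A a
    have eAb : (∑ i ∈ A, d i b) = rA b := hcol A b
    have eBa : (∑ i ∈ B, d i a) = rB a := hcol B a
    have eBb : (∑ i ∈ B, d i b) = rB b := hcol B b
    have eArA : (∑ i ∈ A, rA i) = dsum d A A := rfl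
    have eArB : (∑ i ∈ A, rB i) = dsum d A B := rfl
    have eBrA : (∑ i ∈ B, rA i) = dsum d A B := by rw [show (∑ i ∈ B, rA i) = dsum d B A from rfl, hSBA]
    have eBrB : (∑ i ∈ B, rB i) = dsum d B B := rfl
    rw [eAa, eAb, eBa, eBb, eArA, eArB, eBrA, eBrB, hdiag a, hdiag b, hsymm b a] at h
    nlinarith [h]
  -- sum step2 over A
  have hsum2 := Finset.sum_le_sum step2
  have hL : ∑ a ∈ A, (2*(k:ℝ)^2 * d a (π a) + (dsum d A A + dsum d B B + 2 * dsum d A B))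
      = 2*(k:ℝ)^2 * (∑ a ∈ A, d a (π a)) + k * (dsum d A A + dsum d B B + 2 * dsum d A B) := by
    rw [Finset.sum_add_distrib, Finset.sum_const, ← Finset.mul_sum, hAcard, nsmul_eq_mul]
  have hR : ∑ a ∈ A, 2*(k:ℝ)*(rA a + rB a + rA (π a) + rB (π a))
      = 2*(k:ℝ)*(dsum d A A + dsum d A B + dsum d A B + dsum d B B) := by
    rw [← Finset.mul_sum]
    congr 1
    simp only [Finset.sum_add_distrib]
    rw [hreindex rA, hreindex rB]
    rw [show (∑ a ∈ A, rA a) = dsum d A A from rfl, show (∑ a ∈ A, rB a) = dsum d A B from rfl,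
      show (∑ b ∈ B, rA b) = dsum d B A from rfl, hSBA,
      show (∑ b ∈ B, rB b) = dsum d B B from rfl]
  rw [hL, hR] at hsum2
  -- conclude
  have h2disp : 2 * disp d A = dsum d A A := by unfold disp dsum; ring
  have hkpos : (1:ℝ) ≤ (k:ℝ) := by exact_mod_cast hk
  have hM : dsum d A B ≥ (k:ℝ)/2 * ∑ a ∈ A, d a (π a) := by
    nlinarith [hsum2, step1, hkpos]
  rw [h2disp]
  linarith
end

section
/- Let g = d + f where d is a set function and f a set function on a finite ground set X, and let A, B be bases of a matroid M with Brualdi bijection π : A → B. Suppose d(A) ≥ (1 − 4/k)·d(B) + (1 − 2/k)·∑_{a∈A}(d(A) − d(A − a + π(a))) and f(A) ≥ (1 − c/e)·f(B) + ∑_{a∈A}(F(A) − F(A − a + π(a))) for some potential F. Define G = (1 − 2/k)·d + F. If A satisfies G(A) ≥ G(A − a + π(a)) for all a ∈ A, then g(A) ≥ (1 − λ_d·(4/k) − λ_f·(c/e))·g(B), where λ_d = d(B)/g(B) and λ_f = f(B)/g(B) (assuming g(B) > 0). -/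
open Finset

theorem stmt_14 {X : Type*} [DecidableEq X] (k : ℕ) (hk : 1 ≤ k) (c : ℝ)
    (d f F : Finset X → ℝ) (A B : Finset X) (π : X → X)
    (hgB : 0 < d B + f B)
    (hd : d A ≥ (1 - 4 / k) * d B
      + (1 - 2 / k) * ∑ a ∈ A, (d A - d (insert (π a) (A.erase a))))
    (hf : f A ≥ (1 - c / Real.exp 1) * f B
      + ∑ a ∈ A, (F A - F (insert (π a) (A.erase a))))
    (hloc : ∀ a ∈ A,
      (1 - 2 / k) * d A + F A
        ≥ (1 - 2 / k) * d (insert (π a) (A.erase a)) + F (insert (π a) (A.erase a))) :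
    d A + f A ≥ (1 - (d B / (d B + f B)) * (4 / k)
      - (f B / (d B + f B)) * (c / Real.exp 1)) * (d B + f B) := by
  have hsum : 0 ≤ ∑ a ∈ A, ((1 - 2 / (k:ℝ)) * (d A - d (insert (π a) (A.erase a)))
      + (F A - F (insert (π a) (A.erase a)))) := by
    apply Finset.sum_nonneg
    intro a ha
    have := hloc a ha
    nlinarith [this]
  have hrw : (1 - (d B / (d B + f B)) * (4 / k)
      - (f B / (d B + f B)) * (c / Real.exp 1)) * (d B + f B)
      = (1 - 4 / k) * d B + (1 - c / Real.exp 1) * f B := by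
    field_simp
    ring
  rw [hrw]
  have h2 : (1 - 2 / (k:ℝ)) * ∑ a ∈ A, (d A - d (insert (π a) (A.erase a)))
      + ∑ a ∈ A, (F A - F (insert (π a) (A.erase a)))
      = ∑ a ∈ A, ((1 - 2 / (k:ℝ)) * (d A - d (insert (π a) (A.erase a)))
      + (F A - F (insert (π a) (A.erase a)))) := by
    rw [Finset.mul_sum, Finset.sum_add_distrib]
  linarith [hd, hf]
end

section
/- Let f : 2^X → ℝ≥0 be a monotone submodular function with f(∅) = 0 and curvature c, and define l(A) = ∑_{a∈A}(f(X) − f(X \ {a})) and f'(A) = f(A) − l(A). Then l is modular, f' is monotone, submodular, normalized (f'(∅)=0), nonnegative, and f'(A) ≤ c·f(A) for every A ⊆ X. -/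
/-!
Submodularity applied to `insert a C` and `X \ {a}` shows that the marginal value of `a` at the
top, `f X - f (X \ {a})`, is its smallest marginal value. Hence removing the modular function `l`
with these weights keeps `f` monotone, and removing a modular function never breaks
submodularity. For the curvature bound, `f {a} * (1 - c)` is at most the weight of `a`, so
`(1 - c) f(A) ≤ (1 - c) ∑_{a ∈ A} f {a} ≤ l(A)` by subadditivity of `f`.
-/

open Finset

def IsSubmodular {α : Type*} [DecidableEq α] (f : Finset α → ℝ) : Prop :=
  ∀ A B : Finset α, f (A ∪ B) + f (A ∩ B) ≤ f A + f B

namespace IsSubmodular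

variable {α : Type*} [DecidableEq α] {f : Finset α → ℝ}

theorem marginal_le_of_subset (hf : IsSubmodular f) {A B : Finset α} {a : α} (hAB : A ⊆ B)
    (ha : a ∉ B) : f (insert a B) - f B ≤ f (insert a A) - f A := by
  have h := hf (insert a A) B
  rw [insert_union, union_eq_right.2 hAB, insert_inter_of_notMem ha, inter_eq_left.2 hAB] at h
  linarith

theorem le_sum_singleton (hf : IsSubmodular f) (h0 : f ∅ = 0) (A : Finset α) :
    f A ≤ ∑ a ∈ A, f {a} := by
  induction A using Finset.induction_on with
  | empty => simp [h0]
  | insert a A ha ih =>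
    have h := hf {a} A
    rw [← insert_eq, singleton_inter_of_notMem ha, h0] at h
    rw [sum_insert ha]
    linarith

theorem sub_sum (hf : IsSubmodular f) (w : α → ℝ) :
    IsSubmodular fun A => f A - ∑ a ∈ A, w a := by
  intro A B
  have := hf A B
  have := sum_union_inter (s₁ := A) (s₂ := B) (f := w)
  linarith

end IsSubmodular

section TopMarginal

variable {α : Type*} [Fintype α] [DecidableEq α] {f : Finset α → ℝ}

def topMarginal (f : Finset α → ℝ) (a : α) : ℝ :=
  f univ - f (univ.erase a)

theorem topMarginal_nonneg (hmono : Monotone f) (a : α) : 0 ≤ topMarginal f a :=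
  sub_nonneg.2 (hmono (erase_subset a univ))

theorem IsSubmodular.topMarginal_le (hf : IsSubmodular f) {C : Finset α} {a : α} (ha : a ∉ C) :
    topMarginal f a ≤ f (insert a C) - f C := by
  have h := hf.marginal_le_of_subset (subset_erase.2 ⟨subset_univ C, ha⟩) (notMem_erase a univ)
  rwa [insert_erase (mem_univ a)] at h

theorem IsSubmodular.monotone_sub_sum_topMarginal (hf : IsSubmodular f) :
    Monotone fun A => f A - ∑ a ∈ A, topMarginal f a := by
  refine monotone_iff_forall_le_insert.2 fun C a ha => ?_
  have := hf.topMarginal_le ha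
  simp only [sum_insert ha]
  linarith

theorem IsSubmodular.mul_le_sum_topMarginal (hf : IsSubmodular f) (h0 : f ∅ = 0) {m : ℝ}
    (hm : 0 ≤ m) (hle : ∀ a, m * f {a} ≤ topMarginal f a) (A : Finset α) :
    m * f A ≤ ∑ a ∈ A, topMarginal f a :=
  calc m * f A ≤ m * ∑ a ∈ A, f {a} := mul_le_mul_of_nonneg_left (hf.le_sum_singleton h0 A) hm
    _ = ∑ a ∈ A, m * f {a} := mul_sum A _ m
    _ ≤ ∑ a ∈ A, topMarginal f a := sum_le_sum fun a _ => hle a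

end TopMarginal

theorem stmt_16_general {X : Type*} [Fintype X] [DecidableEq X] [Nonempty X]
    (f : Finset X → ℝ)
    (hmono : ∀ A B : Finset X, A ⊆ B → f A ≤ f B)
    (hsub : ∀ A B : Finset X, f (A ∪ B) + f (A ∩ B) ≤ f A + f B)
    (hnorm : f ∅ = 0)
    (hpos : ∀ x : X, 0 < f {x})
    (c : ℝ)
    (hc : c = 1 - Finset.univ.inf' Finset.univ_nonempty
      (fun x => (f Finset.univ - f (Finset.univ.erase x)) / f {x}))
    (l f' : Finset X → ℝ)
    (hl : ∀ A : Finset X, l A = ∑ a ∈ A, (f Finset.univ - f (Finset.univ.erase a)))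
    (hf' : ∀ A : Finset X, f' A = f A - l A) :
    (∀ A B : Finset X, l A + l B = l (A ∪ B) + l (A ∩ B)) ∧
    (∀ A B : Finset X, A ⊆ B → f' A ≤ f' B) ∧
    (∀ A B : Finset X, f' (A ∪ B) + f' (A ∩ B) ≤ f' A + f' B) ∧
    f' ∅ = 0 ∧
    (∀ A : Finset X, 0 ≤ f' A) ∧
    (∀ A : Finset X, f' A ≤ c * f A) := by
  have hf : IsSubmodular f := hsub
  obtain rfl : l = fun A => ∑ a ∈ A, topMarginal f a := funext hl
  obtain rfl : f' = fun A => f A - ∑ a ∈ A, topMarginal f a := funext hf'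
  have hf'mono := hf.monotone_sub_sum_topMarginal
  have hf'empty : f ∅ - ∑ a ∈ ∅, topMarginal f a = 0 := by simp [hnorm]
  set m := univ.inf' univ_nonempty fun x => topMarginal f x / f {x}
  obtain rfl : c = 1 - m := hc
  have hm : 0 ≤ m :=
    le_inf' _ _ fun a _ => div_nonneg (topMarginal_nonneg (fun A B => hmono A B) a) (hpos a).le
  have hle (a : X) : m * f {a} ≤ topMarginal f a :=
    (le_div_iff₀ (hpos a)).1 (inf'_le _ (mem_univ a))
  refine ⟨fun A B => sum_union_inter.symm, fun A B h => hf'mono h, hf.sub_sum _, hf'empty,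
    fun A => hf'empty ▸ hf'mono (empty_subset A), fun A => ?_⟩
  have := hf.mul_le_sum_topMarginal hnorm hm hle A
  change f A - _ ≤ (1 - m) * f A
  linarith

theorem stmt_16 {X : Type*} [Fintype X] [DecidableEq X] [Nonempty X]
    (f : Finset X → ℝ)
    (hmono : ∀ A B : Finset X, A ⊆ B → f A ≤ f B)
    (hsub : ∀ A B : Finset X, f (A ∪ B) + f (A ∩ B) ≤ f A + f B)
    (hnorm : f ∅ = 0) (hnn : ∀ A, 0 ≤ f A)
    (hpos : ∀ x : X, 0 < f {x})
    (c : ℝ)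
    (hc : c = 1 - Finset.univ.inf' Finset.univ_nonempty
      (fun x => (f Finset.univ - f (Finset.univ.erase x)) / f {x}))
    (l f' : Finset X → ℝ)
    (hl : ∀ A : Finset X, l A = ∑ a ∈ A, (f Finset.univ - f (Finset.univ.erase a)))
    (hf' : ∀ A : Finset X, f' A = f A - l A) :
    (∀ A B : Finset X, l A + l B = l (A ∪ B) + l (A ∩ B)) ∧
    (∀ A B : Finset X, A ⊆ B → f' A ≤ f' B) ∧
    (∀ A B : Finset X, f' (A ∪ B) + f' (A ∩ B) ≤ f' A + f' B) ∧
    f' ∅ = 0 ∧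
    (∀ A : Finset X, 0 ≤ f' A) ∧
    (∀ A : Finset X, f' A ≤ c * f A) :=
  stmt_16_general f hmono hsub hnorm hpos c hc l f' hl hf'
end

section
/- Let M₁ = (X, I₁), M₂ = (X, I₂) be matroids and let k be the maximum cardinality of a common independent set. Then every inclusion-wise maximal common independent set A ∈ I₁ ∩ I₂ satisfies |A| ≥ k/2. -/
/-!
If `A` is a common independent set that cannot be augmented, then every element outside `A`
lies in the closure of `A` in one of the two matroids. A set independent in `Mᵢ` meets the
closure of `A` in at most `rᵢ(A) = |A|` elements, so any common independent set has at most
`2|A|` elements.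
-/

open Set

namespace Matroid

variable {α : Type*} {M M₁ M₂ : Matroid α} {I A : Set α}

lemma Indep.encard_inter_closure_le_eRk (hI : M.Indep I) (X : Set α) :
    (I ∩ M.closure X).encard ≤ M.eRk X := by
  rw [← eRk_closure_eq]
  exact (hI.subset inter_subset_left).encard_le_eRk_of_subset inter_subset_right

lemma subset_closure_union_closure_of_forall_insert
    (hA₁ : M₁.Indep A) (hA₂ : M₂.Indep A) (hI₁ : I ⊆ M₁.E) (hI₂ : I ⊆ M₂.E)
    (hA : ∀ x, M₁.Indep (insert x A) → M₂.Indep (insert x A) → x ∈ A) :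
    I ⊆ M₁.closure A ∪ M₂.closure A := by
  intro x hxI
  by_contra hx
  rw [mem_union, not_or] at hx
  have hxA : x ∈ A :=
    hA x (hA₁.insert_indep_iff.2 (.inl ⟨hI₁ hxI, hx.1⟩))
      (hA₂.insert_indep_iff.2 (.inl ⟨hI₂ hxI, hx.2⟩))
  exact hx.1 (M₁.subset_closure A hA₁.subset_ground hxA)

theorem encard_le_two_mul_of_forall_insert
    (hA₁ : M₁.Indep A) (hA₂ : M₂.Indep A) (hI₁ : M₁.Indep I) (hI₂ : M₂.Indep I)
    (hA : ∀ x, M₁.Indep (insert x A) → M₂.Indep (insert x A) → x ∈ A) :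
    I.encard ≤ 2 * A.encard := by
  have hcover := subset_closure_union_closure_of_forall_insert hA₁ hA₂
    hI₁.subset_ground hI₂.subset_ground hA
  calc I.encard = (I ∩ M₁.closure A ∪ I ∩ M₂.closure A).encard := by
        rw [← inter_union_distrib_left, inter_eq_left.2 hcover]
    _ ≤ (I ∩ M₁.closure A).encard + (I ∩ M₂.closure A).encard := encard_union_le _ _
    _ ≤ M₁.eRk A + M₂.eRk A :=
        add_le_add (hI₁.encard_inter_closure_le_eRk A) (hI₂.encard_inter_closure_le_eRk A)
    _ = 2 * A.encard := by rw [hA₁.eRk_eq_encard, hA₂.eRk_eq_encard, two_mul]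

end Matroid

theorem stmt_18_general {X : Type*}
    (M₁ M₂ : Matroid X) (k : ℕ)
    (hexists : ∃ I : Finset X, M₁.Indep ↑I ∧ M₂.Indep ↑I ∧ I.card = k)
    (A : Finset X) (hA₁ : M₁.Indep ↑A) (hA₂ : M₂.Indep ↑A)
    (hmaximal : ∀ B : Finset X, A ⊆ B → M₁.Indep ↑B → M₂.Indep ↑B → B = A) :
    (k : ℝ) / 2 ≤ A.card := by
  classical
  obtain ⟨I, hI₁, hI₂, rfl⟩ := hexists
  have hA : ∀ x, M₁.Indep (insert x (A : Set X)) → M₂.Indep (insert x (A : Set X)) → x ∈ A := by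
    intro x h₁ h₂
    rw [← Finset.coe_insert] at h₁ h₂
    rw [← hmaximal _ (Finset.subset_insert x A) h₁ h₂]
    exact Finset.mem_insert_self x A
  have hcard := Matroid.encard_le_two_mul_of_forall_insert hA₁ hA₂ hI₁ hI₂ hA
  rw [encard_coe_eq_coe_finsetCard, encard_coe_eq_coe_finsetCard] at hcard
  have hcard' : I.card ≤ 2 * A.card := by exact_mod_cast hcard
  rw [div_le_iff₀ two_pos]
  exact_mod_cast hcard'.trans_eq (mul_comm _ _)

theorem stmt_18 {X : Type*} [Fintype X] [DecidableEq X]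
    (M₁ M₂ : Matroid X) (k : ℕ)
    (hmax : ∀ I : Finset X, M₁.Indep ↑I → M₂.Indep ↑I → I.card ≤ k)
    (hexists : ∃ I : Finset X, M₁.Indep ↑I ∧ M₂.Indep ↑I ∧ I.card = k)
    (A : Finset X) (hA₁ : M₁.Indep ↑A) (hA₂ : M₂.Indep ↑A)
    (hmaximal : ∀ B : Finset X, A ⊆ B → M₁.Indep ↑B → M₂.Indep ↑B → B = A) :
    (k : ℝ) / 2 ≤ A.card :=
  stmt_18_general M₁ M₂ k hexists A hA₁ hA₂ hmaximal
end
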